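/- arXiv:2212.02160 — 4 statements merged into one kernel-verified Lean document; each statement's English description precedes it below -/
import Mathlib

section
/- Let m_α, m_β be positive real numbers with m_α ≠ m_β, and set ρ = ((√m_α − √m_β)/(√m_α + √m_β))²; then 0 < ρ < 1. Let ξ, ξ*, ξ′, ξ*′ ∈ ℝ³, q ≥ 0, let η ∈ ℝ³ be a unit vector, and let ΔI ∈ ℝ be such that ξ′ = ξ − q η, ξ*′ = ξ* − (m_α/m_β) q η, and m_α|ξ|²/2 + m_β|ξ*′|²/2 = m_α|ξ′|²/2 + m_β|ξ*|²/2 + ΔI. Then m_α|ξ′|² + m_β|ξ*′|² ≥ ρ(m_α|ξ|² + m_β|ξ*|²) + (1+ρ)·((m_α − m_β)/(m_α + m_β))·ΔI ≥ ρ(m_α|ξ|² + m_β|ξ*|²) − 2|ΔI|. -/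
/-!
Write `mα = a²`, `mβ = b²`. The hypotheses on `ξ'` and `ξ*'` imply
`mα ξ' - mβ ξ*' = mα ξ - mβ ξ*`, and with `ρ = ((a - b) / (a + b))²` the coefficient
`(1 + ρ) (mα - mβ) / (mα + mβ)` equals `2 (a - b) / (a + b)`. After multiplying by `(a + b)²` and
eliminating `ΔI`, the first inequality becomes the polynomial identity
`(a + b)² (mα|ξ'|² + mβ|ξ*'|²) - (a - b)² (mα|ξ|² + mβ|ξ*|²) - (a² - b²) 2ΔI
  = 2ab (|a ξ' + b ξ*'|² + |a ξ - b ξ*|²)`,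
whose right-hand side is nonnegative. The second inequality is `|(a - b) / (a + b)| < 1`.
-/

open Real

section Collision

variable {E : Type*} [NormedAddCommGroup E] [InnerProductSpace ℝ E]

theorem collision_energy_identity (a b : ℝ) {x y x' y' : E}
    (h : a ^ 2 • x' - b ^ 2 • y' = a ^ 2 • x - b ^ 2 • y) :
    (a + b) ^ 2 * (a ^ 2 * ‖x'‖ ^ 2 + b ^ 2 * ‖y'‖ ^ 2)
      - (a - b) ^ 2 * (a ^ 2 * ‖x‖ ^ 2 + b ^ 2 * ‖y‖ ^ 2)
      - (a ^ 2 - b ^ 2) * (a ^ 2 * ‖x‖ ^ 2 + b ^ 2 * ‖y'‖ ^ 2 - a ^ 2 * ‖x'‖ ^ 2 - b ^ 2 * ‖y‖ ^ 2)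
      = 2 * a * b * (‖a • x' + b • y'‖ ^ 2 + ‖a • x - b • y‖ ^ 2) := by
  have hn := congrArg (fun v : E => ‖v‖ ^ 2) h
  simp only [norm_sub_sq_real, norm_add_sq_real, norm_smul, real_inner_smul_left,
    real_inner_smul_right, mul_pow, Real.norm_eq_abs, sq_abs] at hn ⊢
  linear_combination 2 * hn

theorem collision_energy_lower_bound {a b : ℝ} (ha : 0 ≤ a) (hb : 0 ≤ b) (hab : 0 < a + b)
    {x y x' y' : E} (h : a ^ 2 • x' - b ^ 2 • y' = a ^ 2 • x - b ^ 2 • y) {ΔI : ℝ}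
    (hΔI : a ^ 2 * ‖x‖ ^ 2 / 2 + b ^ 2 * ‖y'‖ ^ 2 / 2
      = a ^ 2 * ‖x'‖ ^ 2 / 2 + b ^ 2 * ‖y‖ ^ 2 / 2 + ΔI) :
    ((a - b) / (a + b)) ^ 2 * (a ^ 2 * ‖x‖ ^ 2 + b ^ 2 * ‖y‖ ^ 2) + 2 * ((a - b) / (a + b)) * ΔI
      ≤ a ^ 2 * ‖x'‖ ^ 2 + b ^ 2 * ‖y'‖ ^ 2 := by
  have hgap : a ^ 2 * ‖x'‖ ^ 2 + b ^ 2 * ‖y'‖ ^ 2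
      - (((a - b) / (a + b)) ^ 2 * (a ^ 2 * ‖x‖ ^ 2 + b ^ 2 * ‖y‖ ^ 2)
        + 2 * ((a - b) / (a + b)) * ΔI)
      = 2 * a * b * (‖a • x' + b • y'‖ ^ 2 + ‖a • x - b • y‖ ^ 2) / (a + b) ^ 2 := by
    rw [← collision_energy_identity a b h]
    field_simp
    linear_combination (2 * (a - b) * (a + b)) * hΔI
  rw [← sub_nonneg, hgap]
  positivity

end Collision

theorem abs_sub_div_add_lt_one {a b : ℝ} (ha : 0 < a) (hb : 0 < b) :
    |(a - b) / (a + b)| < 1 := by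
  rw [abs_div, abs_of_pos (add_pos ha hb), div_lt_one (add_pos ha hb), abs_sub_lt_iff]
  constructor <;> linarith

theorem one_add_sq_sub_div_add_mul_sq_sub_div_sq_add {a b : ℝ} (ha : 0 < a) (hb : 0 < b) :
    (1 + ((a - b) / (a + b)) ^ 2) * ((a ^ 2 - b ^ 2) / (a ^ 2 + b ^ 2))
      = 2 * ((a - b) / (a + b)) := by
  have : a + b ≠ 0 := by positivity
  have : a ^ 2 + b ^ 2 ≠ 0 := by positivity
  field_simp
  ring

theorem energy_estimate_disparate_masses_general
    (mα mβ : ℝ) (hmα : 0 < mα) (hmβ : 0 < mβ) (hne : mα ≠ mβ)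
    (ρ : ℝ)
    (hρ : ρ = ((Real.sqrt mα - Real.sqrt mβ) / (Real.sqrt mα + Real.sqrt mβ)) ^ 2)
    (ξ ξs ξ' ξs' : EuclideanSpace ℝ (Fin 3))
    (q : ℝ) (η : EuclideanSpace ℝ (Fin 3))
    (ΔI : ℝ)
    (h1 : ξ' = ξ - q • η)
    (h2 : ξs' = ξs - (mα / mβ * q) • η)
    (h3 : mα * ‖ξ‖ ^ 2 / 2 + mβ * ‖ξs'‖ ^ 2 / 2
        = mα * ‖ξ'‖ ^ 2 / 2 + mβ * ‖ξs‖ ^ 2 / 2 + ΔI) :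
    0 < ρ ∧ ρ < 1 ∧
    mα * ‖ξ'‖ ^ 2 + mβ * ‖ξs'‖ ^ 2
      ≥ ρ * (mα * ‖ξ‖ ^ 2 + mβ * ‖ξs‖ ^ 2) + (1 + ρ) * ((mα - mβ) / (mα + mβ)) * ΔI ∧
    ρ * (mα * ‖ξ‖ ^ 2 + mβ * ‖ξs‖ ^ 2) + (1 + ρ) * ((mα - mβ) / (mα + mβ)) * ΔI
      ≥ ρ * (mα * ‖ξ‖ ^ 2 + mβ * ‖ξs‖ ^ 2) - 2 * |ΔI| := by
  have hmom : mα • ξ' - mβ • ξs' = mα • ξ - mβ • ξs := by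
    have hcancel : mβ * (mα / mβ * q) = mα * q := by field_simp
    rw [h1, h2, smul_sub, smul_sub, smul_smul, smul_smul, hcancel]
    abel
  obtain ⟨a, ha, rfl⟩ : ∃ a, 0 < a ∧ mα = a ^ 2 := ⟨√mα, sqrt_pos.2 hmα, (sq_sqrt hmα.le).symm⟩
  obtain ⟨b, hb, rfl⟩ : ∃ b, 0 < b ∧ mβ = b ^ 2 := ⟨√mβ, sqrt_pos.2 hmβ, (sq_sqrt hmβ.le).symm⟩
  rw [sqrt_sq ha.le, sqrt_sq hb.le] at hρ
  subst hρ
  have hc : |(a - b) / (a + b)| < 1 := abs_sub_div_add_lt_one ha hb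
  have hc0 : (a - b) / (a + b) ≠ 0 :=
    div_ne_zero (sub_ne_zero.2 fun h ↦ hne (by rw [h])) (add_pos ha hb).ne'
  rw [one_add_sq_sub_div_add_mul_sq_sub_div_sq_add ha hb]
  refine ⟨sq_pos_of_ne_zero hc0, (sq_lt_one_iff_abs_lt_one _).2 hc,
    collision_energy_lower_bound ha.le hb.le (add_pos ha hb) hmom h3, ?_⟩
  have : |(a - b) / (a + b) * ΔI| ≤ |ΔI| := by
    rw [abs_mul]
    exact mul_le_of_le_one_left (abs_nonneg _) hc.le
  linarith [neg_abs_le ((a - b) / (a + b) * ΔI)]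

/-- Lemma 3 of the paper: energy estimate for disparate masses. -/
theorem energy_estimate_disparate_masses
    (mα mβ : ℝ) (hmα : 0 < mα) (hmβ : 0 < mβ) (hne : mα ≠ mβ)
    (ρ : ℝ)
    (hρ : ρ = ((Real.sqrt mα - Real.sqrt mβ) / (Real.sqrt mα + Real.sqrt mβ)) ^ 2)
    (ξ ξs ξ' ξs' : EuclideanSpace ℝ (Fin 3))
    (q : ℝ) (hq : 0 ≤ q) (η : EuclideanSpace ℝ (Fin 3)) (hη : ‖η‖ = 1)
    (ΔI : ℝ)
    (h1 : ξ' = ξ - q • η)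
    (h2 : ξs' = ξs - (mα / mβ * q) • η)
    (h3 : mα * ‖ξ‖ ^ 2 / 2 + mβ * ‖ξs'‖ ^ 2 / 2
        = mα * ‖ξ'‖ ^ 2 / 2 + mβ * ‖ξs‖ ^ 2 / 2 + ΔI) :
    0 < ρ ∧ ρ < 1 ∧
    mα * ‖ξ'‖ ^ 2 + mβ * ‖ξs'‖ ^ 2
      ≥ ρ * (mα * ‖ξ‖ ^ 2 + mβ * ‖ξs‖ ^ 2) + (1 + ρ) * ((mα - mβ) / (mα + mβ)) * ΔI ∧
    ρ * (mα * ‖ξ‖ ^ 2 + mβ * ‖ξs‖ ^ 2) + (1 + ρ) * ((mα - mβ) / (mα + mβ)) * ΔI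
      ≥ ρ * (mα * ‖ξ‖ ^ 2 + mβ * ‖ξs‖ ^ 2) - 2 * |ΔI| :=
  energy_estimate_disparate_masses_general mα mβ hmα hmβ hne ρ hρ ξ ξs ξ' ξs' q η ΔI h1 h2 h3
end

section
/- Let a, b, c ∈ ℝ with c ≠ 0 and a ≠ b, and set ρ₀ = 1 + (a−b)²/(2c²) − (1/(2c²))·√((a−b)⁴ + 4c²(a−b)²). Then 0 ≤ ρ₀ < 1, and for every ρ with 0 ≤ ρ ≤ ρ₀ and every r ∈ ℝ one has (r + a)² − ρ(r + b)² + (1 − ρ)c² ≥ 0. -/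
/-- Quadratic positivity estimate used in the proof of Lemma 3. -/
theorem quadratic_positivity
    (a b c : ℝ) (hc : c ≠ 0) (hab : a ≠ b)
    (ρ₀ : ℝ)
    (hρ₀ : ρ₀ = 1 + (a - b) ^ 2 / (2 * c ^ 2)
        - 1 / (2 * c ^ 2) * Real.sqrt ((a - b) ^ 4 + 4 * c ^ 2 * (a - b) ^ 2)) :
    0 ≤ ρ₀ ∧ ρ₀ < 1 ∧
    ∀ ρ : ℝ, 0 ≤ ρ → ρ ≤ ρ₀ → ∀ r : ℝ,
      0 ≤ (r + a) ^ 2 - ρ * (r + b) ^ 2 + (1 - ρ) * c ^ 2 := by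
  have hc2 : (0:ℝ) < c ^ 2 := by positivity
  set d : ℝ := (a - b) ^ 2 with hdd
  have hd : 0 < d := by
    have : a - b ≠ 0 := sub_ne_zero.mpr hab
    positivity
  set s : ℝ := Real.sqrt ((a - b) ^ 4 + 4 * c ^ 2 * (a - b) ^ 2) with hss
  have hsnn : 0 ≤ s := Real.sqrt_nonneg _
  have hs2 : s ^ 2 = d ^ 2 + 4 * c ^ 2 * d := by
    rw [hss, Real.sq_sqrt (by positivity)]; ring
  have hslt : s < 2 * c ^ 2 + d := by nlinarith [hs2, hsnn]
  have hsgt : d < s := by nlinarith [hs2, hsnn]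
  have hρ₀' : ρ₀ * (2 * c ^ 2) = 2 * c ^ 2 + d - s := by
    rw [hρ₀]; field_simp
  have h0 : 0 ≤ ρ₀ := by nlinarith [hρ₀']
  have h1 : ρ₀ < 1 := by nlinarith [hρ₀']
  refine ⟨h0, h1, fun ρ hρ hρle r => ?_⟩
  have hroot : (1 - ρ₀) ^ 2 * c ^ 2 - ρ₀ * d = 0 := by nlinarith [hρ₀', hs2]
  have key : 0 ≤ (1 - ρ) ^ 2 * c ^ 2 - ρ * d := by
    nlinarith [mul_nonneg (sub_nonneg.mpr hρle)
      (show 0 ≤ 2 * c ^ 2 + d - c ^ 2 * (ρ + ρ₀) by nlinarith)]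
  have h1ρ : 0 < 1 - ρ := by linarith
  nlinarith [sq_nonneg ((1 - ρ) * r + (a - ρ * b)), key, mul_pos h1ρ hc2,
    mul_nonneg key (le_of_lt h1ρ)]
end

section
/- Let c₁, c₂ > 0. Then there exists a constant C > 0, depending only on c₁ and c₂, such that for every A ∈ ℝ and every nonzero ξ ∈ ℝ³, ∫_{ℝ³} (1/|g|)·exp(−c₁·(|g| + 2(g·ξ)/|g| + A/|g|)²)·exp(−c₂|g|²) dg ≤ C/|ξ|. -/
/-!
Reflect ξ onto ‖ξ‖e₀ and pass to cylindrical coordinates about that axis, x = g₀ and r = |g|: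
Lebesgue measure on ℝ³ becomes 2π r dr dx on {|x| < r}, and the factor r cancels 1/|g|.
Enlarging the region to r > 0 and integrating in x first, the exponent
c₁(r + A/r + (2‖ξ‖/r) x)² is a Gaussian in x, with integral √(π/c₁) r/(2‖ξ‖); what is left,
∫₀^∞ r e^{-c₂r²} dr = 1/(2c₂), gives C = π √(π/c₁)/(2c₂).
-/

open MeasureTheory Measure Set Metric Real
open scoped ENNReal

theorem lintegral_fun_norm_addHaar {E : Type*} [NormedAddCommGroup E] [NormedSpace ℝ E]
    [Nontrivial E] [FiniteDimensional ℝ E] [MeasurableSpace E] [BorelSpace E] (μ : Measure E)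
    [μ.IsAddHaarMeasure] {f : ℝ → ℝ≥0∞} (hf : Measurable f) :
    ∫⁻ x, f ‖x‖ ∂μ = μ.toSphere univ *
      ∫⁻ y in Ioi (0 : ℝ), ENNReal.ofReal (y ^ (Module.finrank ℝ E - 1)) * f y := by
  have hf₂ : Measurable fun p : sphere (0 : E) 1 × Ioi (0 : ℝ) ↦ f p.2 := by fun_prop
  calc ∫⁻ x, f ‖x‖ ∂μ
      = ∫⁻ x : ({(0 : E)}ᶜ : Set E), f ‖x.1‖ ∂(μ.comap (↑)) := by
        rw [lintegral_subtype_comap (measurableSet_singleton _).compl (fun x ↦ f ‖x‖),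
          restrict_compl_singleton]
    _ = ∫⁻ p, f p.2 ∂μ.toSphere.prod (volumeIoiPow (Module.finrank ℝ E - 1)) := by
        rw [← μ.measurePreserving_homeomorphUnitSphereProd.lintegral_comp hf₂]
        simp [homeomorphUnitSphereProd_apply_snd_coe]
    _ = μ.toSphere univ * ∫⁻ r, f r ∂volumeIoiPow (Module.finrank ℝ E - 1) := by
        rw [lintegral_prod _ hf₂.aemeasurable]
        simp [lintegral_const, mul_comm]
    _ = _ := by
        rw [volumeIoiPow, lintegral_withDensity_eq_lintegral_mul _ (by fun_prop) (by fun_prop),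
          ← lintegral_subtype_comap measurableSet_Ioi]
        rfl

theorem image_sqrt_sq_add_sq_Ioi (x : ℝ) :
    (fun ρ ↦ √(x ^ 2 + ρ ^ 2)) '' Ioi 0 = Ioi |x| := by
  ext r
  constructor
  · rintro ⟨ρ, hρ : 0 < ρ, rfl⟩
    rw [mem_Ioi, ← sqrt_sq_eq_abs]
    exact sqrt_lt_sqrt (sq_nonneg x) (by nlinarith)
  · intro (hr : |x| < r)
    have hxr : x ^ 2 < r ^ 2 := sq_lt_sq' (abs_lt.1 hr).1 (abs_lt.1 hr).2
    refine ⟨√(r ^ 2 - x ^ 2), sqrt_pos.2 (by linarith), ?_⟩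
    change √(x ^ 2 + √(r ^ 2 - x ^ 2) ^ 2) = r
    rw [sq_sqrt (by linarith), add_sub_cancel, sqrt_sq ((abs_nonneg x).trans hr.le)]

theorem lintegral_Ioi_comp_sqrt_sq_add_sq (x : ℝ) (g : ℝ → ℝ≥0∞) :
    ∫⁻ ρ in Ioi 0, ENNReal.ofReal ρ * g √(x ^ 2 + ρ ^ 2) =
      ∫⁻ r in Ioi |x|, ENNReal.ofReal r * g r := by
  have hpos : ∀ ρ ∈ Ioi (0 : ℝ), 0 < x ^ 2 + ρ ^ 2 := fun ρ (hρ : 0 < ρ) ↦ by positivity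
  have hslope : ∀ ρ ∈ Ioi (0 : ℝ), 0 ≤ ρ / √(x ^ 2 + ρ ^ 2) := fun ρ (hρ : 0 < ρ) ↦ by positivity
  have hderiv : ∀ ρ ∈ Ioi (0 : ℝ), HasDerivWithinAt (fun ρ ↦ √(x ^ 2 + ρ ^ 2))
      (ρ / √(x ^ 2 + ρ ^ 2)) (Ioi 0) ρ := by
    intro ρ hρ
    have := ((hasDerivAt_pow 2 ρ).const_add (x ^ 2)).sqrt (hpos ρ hρ).ne'
    refine this.hasDerivWithinAt.congr_deriv ?_
    push_cast
    ring
  have hinj : InjOn (fun ρ ↦ √(x ^ 2 + ρ ^ 2)) (Ioi 0) := by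
    intro a (ha : 0 < a) b (hb : 0 < b) hab
    have := sqrt_inj (by positivity) (by positivity) |>.1 hab
    nlinarith
  rw [← image_sqrt_sq_add_sq_Ioi, lintegral_image_eq_lintegral_abs_deriv_mul measurableSet_Ioi
    hderiv hinj]
  refine setLIntegral_congr_fun measurableSet_Ioi fun ρ hρ ↦ ?_
  rw [abs_of_nonneg (hslope ρ hρ), ← mul_assoc, ← ENNReal.ofReal_mul (hslope ρ hρ),
    div_mul_cancel₀ _ (sqrt_pos.2 (hpos ρ hρ)).ne']

theorem EuclideanSpace.volume_toSphere_univ_fin_two :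
    (volume : Measure (EuclideanSpace ℝ (Fin 2))).toSphere univ = ENNReal.ofReal (2 * π) := by
  rw [toSphere_apply_univ, EuclideanSpace.volume_ball_fin_two, finrank_euclideanSpace_fin]
  simp [ENNReal.ofReal_mul]

theorem EuclideanSpace.lintegral_fin_two_comp_sqrt_sq_add_norm_sq (x : ℝ) {g : ℝ → ℝ≥0∞}
    (hg : Measurable g) :
    ∫⁻ w : EuclideanSpace ℝ (Fin 2), g √(x ^ 2 + ‖w‖ ^ 2) =
      ENNReal.ofReal (2 * π) * ∫⁻ r in Ioi |x|, ENNReal.ofReal r * g r := by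
  rw [lintegral_fun_norm_addHaar volume (f := fun ρ ↦ g √(x ^ 2 + ρ ^ 2)) (by fun_prop),
    volume_toSphere_univ_fin_two, finrank_euclideanSpace_fin, Nat.add_one_sub_one]
  simp_rw [pow_one, lintegral_Ioi_comp_sqrt_sq_add_sq]

theorem EuclideanSpace.norm_toLp_cons (x : ℝ) {n : ℕ} (w : Fin n → ℝ) :
    ‖WithLp.toLp 2 (Fin.cons x w : Fin (n + 1) → ℝ)‖ = √(x ^ 2 + ‖WithLp.toLp 2 w‖ ^ 2) := by
  rw [EuclideanSpace.norm_eq, EuclideanSpace.norm_eq, sq_sqrt (by positivity), Fin.sum_univ_succ]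
  simp

theorem EuclideanSpace.lintegral_fin_three_comp_coord_norm {f : ℝ → ℝ → ℝ≥0∞}
    (hf : Measurable (Function.uncurry f)) :
    ∫⁻ v : EuclideanSpace ℝ (Fin 3), f (v 0) ‖v‖ =
      ENNReal.ofReal (2 * π) * ∫⁻ x, ∫⁻ r in Ioi |x|, ENNReal.ofReal r * f x r := by
  have hf₃ : Measurable fun y : Fin 3 → ℝ ↦ f (y 0) ‖WithLp.toLp 2 y‖ :=
    hf.comp (f := fun y : Fin 3 → ℝ ↦ (y 0, ‖WithLp.toLp 2 y‖)) (by fun_prop)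
  have hf₁₂ : Measurable fun p : ℝ × (Fin 2 → ℝ) ↦ f p.1 √(p.1 ^ 2 + ‖WithLp.toLp 2 p.2‖ ^ 2) :=
    hf.comp (f := fun p : ℝ × (Fin 2 → ℝ) ↦ (p.1, √(p.1 ^ 2 + ‖WithLp.toLp 2 p.2‖ ^ 2)))
      (by fun_prop)
  calc ∫⁻ v : EuclideanSpace ℝ (Fin 3), f (v 0) ‖v‖
      = ∫⁻ y : Fin 3 → ℝ, f (y 0) ‖WithLp.toLp 2 y‖ :=
        ((PiLp.volume_preserving_toLp (Fin 3)).lintegral_comp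
          (hf.comp (f := fun v : EuclideanSpace ℝ (Fin 3) ↦ (v 0, ‖v‖)) (by fun_prop))).symm
    _ = ∫⁻ p : ℝ × (Fin 2 → ℝ), f p.1 √(p.1 ^ 2 + ‖WithLp.toLp 2 p.2‖ ^ 2) := by
        rw [← (volume_preserving_piFinSuccAbove (fun _ : Fin 3 ↦ ℝ) 0).symm.lintegral_comp hf₃]
        refine lintegral_congr fun p ↦ ?_
        simp only [MeasurableEquiv.piFinSuccAbove_symm_apply, Fin.insertNthEquiv_zero]
        exact congrArg (f p.1) (EuclideanSpace.norm_toLp_cons p.1 p.2)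
    _ = ∫⁻ x, ∫⁻ w : EuclideanSpace ℝ (Fin 2), f x √(x ^ 2 + ‖w‖ ^ 2) := by
        rw [volume_eq_prod, lintegral_prod _ hf₁₂.aemeasurable]
        refine lintegral_congr fun x ↦ ?_
        exact (PiLp.volume_preserving_toLp (Fin 2)).lintegral_comp
          (hf.comp (f := fun w : EuclideanSpace ℝ (Fin 2) ↦ (x, √(x ^ 2 + ‖w‖ ^ 2)))
            (by fun_prop))
    _ = _ := by
        rw [← lintegral_const_mul' _ _ ENNReal.ofReal_ne_top]
        exact lintegral_congr fun x ↦
          lintegral_fin_two_comp_sqrt_sq_add_norm_sq x hf.of_uncurry_left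

theorem lintegral_comp_inner_norm_eq_of_norm_eq {E : Type*} [NormedAddCommGroup E]
    [InnerProductSpace ℝ E] [FiniteDimensional ℝ E] [MeasurableSpace E] [BorelSpace E]
    (f : ℝ → ℝ → ℝ≥0∞) {u ξ : E} (h : ‖u‖ = ‖ξ‖) :
    ∫⁻ g, f (inner ℝ g ξ) ‖g‖ = ∫⁻ g, f (inner ℝ g u) ‖g‖ := by
  set R := (ℝ ∙ (u - ξ))ᗮ.reflection
  have hR : ∀ g, inner ℝ (R g) ξ = inner ℝ g u := fun g ↦ by
    rw [← Submodule.reflection_sub h, LinearIsometryEquiv.inner_map_map]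
  rw [← R.measurePreserving.lintegral_comp_emb R.toMeasurableEquiv.measurableEmbedding]
  simp only [hR, LinearIsometryEquiv.norm_map]

theorem EuclideanSpace.lintegral_comp_inner_norm {ι : Type*} [Fintype ι] (f : ℝ → ℝ → ℝ≥0∞)
    (ξ : EuclideanSpace ℝ ι) (i : ι) :
    ∫⁻ g, f (inner ℝ g ξ) ‖g‖ = ∫⁻ v : EuclideanSpace ℝ ι, f (‖ξ‖ * v i) ‖v‖ := by
  classical
  rw [lintegral_comp_inner_norm_eq_of_norm_eq f (u := EuclideanSpace.single i ‖ξ‖) (by simp)]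
  simp [EuclideanSpace.inner_single_right]

theorem lintegral_exp_neg_mul_sq_affine {c : ℝ} (hc : 0 < c) (a : ℝ) {b : ℝ} (hb : b ≠ 0) :
    ∫⁻ x : ℝ, ENNReal.ofReal (exp (-c * (a + b * x) ^ 2)) =
      ENNReal.ofReal (√(π / c) / |b|) := by
  have hint : Integrable fun x : ℝ ↦ exp (-c * (a + x) ^ 2) :=
    (integrable_exp_neg_mul_sq hc).comp_add_left a
  rw [← ofReal_integral_eq_lintegral_ofReal (hint.comp_mul_left' hb)
    (.of_forall fun _ ↦ (exp_pos _).le),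
    Measure.integral_comp_mul_left (fun y ↦ exp (-c * (a + y) ^ 2)),
    integral_add_left_eq_self (fun y ↦ exp (-c * y ^ 2)), integral_gaussian, smul_eq_mul,
    abs_inv, inv_mul_eq_div]

theorem integral_Ioi_mul_exp_neg_mul_sq {c : ℝ} (hc : 0 < c) :
    ∫ r in Ioi (0 : ℝ), r * exp (-c * r ^ 2) = (2 * c)⁻¹ := by
  have h := integral_mul_cexp_neg_mul_sq (b := (c : ℂ)) (by simpa using hc)
  have hcast : ∀ r : ℝ,
      (r : ℂ) * Complex.exp (-c * (r : ℂ) ^ 2) = ((r * exp (-c * r ^ 2) : ℝ) : ℂ) := fun r ↦ by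
    push_cast; rfl
  simp_rw [hcast, integral_complex_ofReal] at h
  exact_mod_cast h

noncomputable def shiftedGaussianKernel (c₁ c₂ A t r : ℝ) : ℝ :=
  1 / r * exp (-c₁ * (r + 2 * t / r + A / r) ^ 2) * exp (-c₂ * r ^ 2)

section shiftedGaussianKernel

variable {c₁ c₂ : ℝ} (A : ℝ)

theorem shiftedGaussianKernel_nonneg (t : ℝ) {r : ℝ} (hr : 0 ≤ r) :
    0 ≤ shiftedGaussianKernel c₁ c₂ A t r := by
  unfold shiftedGaussianKernel; positivity

theorem lintegral_ofReal_mul_shiftedGaussianKernel (hc₁ : 0 < c₁) {s r : ℝ} (hs : 0 < s)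
    (hr : 0 < r) :
    ∫⁻ x, ENNReal.ofReal r * ENNReal.ofReal (shiftedGaussianKernel c₁ c₂ A (s * x) r) =
      ENNReal.ofReal (√(π / c₁) / (2 * s) * (r * exp (-c₂ * r ^ 2))) := by
  have hb : 2 * s / r ≠ 0 := by positivity
  have hkernel : ∀ x, r * shiftedGaussianKernel c₁ c₂ A (s * x) r =
      exp (-c₂ * r ^ 2) * exp (-c₁ * ((r + A / r) + 2 * s / r * x) ^ 2) := fun x ↦ by
    unfold shiftedGaussianKernel
    field_simp
    ring_nf
  simp_rw [← ENNReal.ofReal_mul hr.le, hkernel, ENNReal.ofReal_mul (exp_pos _).le]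
  rw [lintegral_const_mul' _ _ ENNReal.ofReal_ne_top, lintegral_exp_neg_mul_sq_affine hc₁ _ hb,
    ← ENNReal.ofReal_mul (exp_pos _).le, abs_of_pos (by positivity)]
  congr 1
  field_simp

theorem lintegral_lintegral_Ioi_abs_shiftedGaussianKernel_le (hc₁ : 0 < c₁) (hc₂ : 0 < c₂)
    {s : ℝ} (hs : 0 < s) :
    ∫⁻ x, ∫⁻ r in Ioi |x|,
        ENNReal.ofReal r * ENNReal.ofReal (shiftedGaussianKernel c₁ c₂ A (s * x) r) ≤
      ENNReal.ofReal (√(π / c₁) / (4 * s * c₂)) := by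
  set G := fun x r ↦ ENNReal.ofReal r * ENNReal.ofReal (shiftedGaussianKernel c₁ c₂ A (s * x) r)
  have hG : Measurable (Function.uncurry G) := by
    unfold G shiftedGaussianKernel; fun_prop
  calc ∫⁻ x, ∫⁻ r in Ioi |x|, G x r ≤ ∫⁻ x, ∫⁻ r in Ioi 0, G x r :=
        lintegral_mono fun x ↦ lintegral_mono_set (Ioi_subset_Ioi (abs_nonneg x))
    _ = ∫⁻ r in Ioi 0, ∫⁻ x, G x r := lintegral_lintegral_swap hG.aemeasurable
    _ = ∫⁻ r in Ioi 0, ENNReal.ofReal (√(π / c₁) / (2 * s) * (r * exp (-c₂ * r ^ 2))) :=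
        setLIntegral_congr_fun measurableSet_Ioi fun r hr ↦
          lintegral_ofReal_mul_shiftedGaussianKernel A hc₁ hs hr
    _ = _ := by
        rw [← ofReal_integral_eq_lintegral_ofReal, integral_const_mul,
          integral_Ioi_mul_exp_neg_mul_sq hc₂]
        · congr 1; field_simp; ring
        · exact ((integrable_mul_exp_neg_mul_sq hc₂).const_mul _).integrableOn
        · filter_upwards [ae_restrict_mem measurableSet_Ioi] with r (hr : 0 < r)
          positivity

end shiftedGaussianKernel

/-- The decay estimate (bound (b7a)) in case II of the proof of Theorem 1. -/
theorem gaussian_shifted_integral_bound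
    (c₁ c₂ : ℝ) (hc₁ : 0 < c₁) (hc₂ : 0 < c₂) :
    ∃ C > (0 : ℝ), ∀ A : ℝ, ∀ ξ : EuclideanSpace ℝ (Fin 3), ξ ≠ 0 →
      (∫ g : EuclideanSpace ℝ (Fin 3),
          (1 / ‖g‖) *
            Real.exp (-c₁ * (‖g‖ + 2 * (inner ℝ g ξ : ℝ) / ‖g‖ + A / ‖g‖) ^ 2) *
            Real.exp (-c₂ * ‖g‖ ^ 2)) ≤ C / ‖ξ‖ := by
  refine ⟨π * √(π / c₁) / (2 * c₂), by positivity, fun A ξ hξ ↦ ?_⟩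
  have hs : 0 < ‖ξ‖ := norm_pos_iff.2 hξ
  set κ : ℝ → ℝ → ℝ≥0∞ := fun t r ↦ ENNReal.ofReal (shiftedGaussianKernel c₁ c₂ A t r)
  change ∫ g, shiftedGaussianKernel c₁ c₂ A (inner ℝ g ξ) ‖g‖ ≤ _
  rw [integral_eq_lintegral_of_nonneg_ae
    (.of_forall fun g ↦ shiftedGaussianKernel_nonneg A _ (norm_nonneg g))
    (by unfold shiftedGaussianKernel; fun_prop)]
  refine ENNReal.toReal_le_of_le_ofReal (by positivity) ?_
  calc ∫⁻ g, κ (inner ℝ g ξ) ‖g‖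
      = ∫⁻ v : EuclideanSpace ℝ (Fin 3), κ (‖ξ‖ * v 0) ‖v‖ :=
        EuclideanSpace.lintegral_comp_inner_norm κ ξ 0
    _ = ENNReal.ofReal (2 * π) * ∫⁻ x, ∫⁻ r in Ioi |x|, ENNReal.ofReal r * κ (‖ξ‖ * x) r :=
        EuclideanSpace.lintegral_fin_three_comp_coord_norm (f := fun x r ↦ κ (‖ξ‖ * x) r)
          (by unfold κ shiftedGaussianKernel; fun_prop)
    _ ≤ ENNReal.ofReal (2 * π) * ENNReal.ofReal (√(π / c₁) / (4 * ‖ξ‖ * c₂)) := by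
        gcongr
        exact lintegral_lintegral_Ioi_abs_shiftedGaussianKernel_le A hc₁ hc₂ hs
    _ = ENNReal.ofReal (π * √(π / c₁) / (2 * c₂) / ‖ξ‖) := by
        rw [← ENNReal.ofReal_mul (by positivity)]
        congr 1
        field_simp
        ring
end

section
/- Let J be a finite nonempty index set and for each j ∈ J let c_j > 0, m_j > 0, and Δ_j ∈ ℝ, and assume that Δ_{j₀} = 0 for some j₀ ∈ J. Define ν(ξ) = Σ_{j∈J} c_j ∫_{ℝ³} e^{−m_j|ξ*|²/2}·√(|ξ − ξ*|² − 2Δ_j)·1_{|ξ − ξ*|² > 2Δ_j} dξ*. Then there exist positive constants ν₋ and ν₊ with 0 < ν₋ < ν₊ such that ν₋·(1 + |ξ|) ≤ ν(ξ) ≤ ν₊·(1 + |ξ|) for all ξ ∈ ℝ³. -/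
/-!
Each term of `ν` is a Gaussian average over `ξ*` of the truncated speed
`√(|ξ - ξ*|² - 2Δ)₊ ≤ |ξ| + |ξ*| + √(2|Δ|)`, which gives the upper bound. For the lower bound
keep only the term with `Δ_{j₀} = 0`, where the speed is `|ξ - ξ*|`: averaging it over `ξ*` and
`-ξ*`, which have the same Gaussian weight, gives at least `(|ξ| + |ξ*|) / 2`.
-/

open MeasureTheory Real

noncomputable def truncSqrt (a s : ℝ) : ℝ := if a < s then √(s - a) else 0

lemma truncSqrt_nonneg (a s : ℝ) : 0 ≤ truncSqrt a s := by
  unfold truncSqrt; split_ifs <;> positivity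

lemma truncSqrt_zero_sq {r : ℝ} (hr : 0 ≤ r) : truncSqrt 0 (r ^ 2) = r := by
  unfold truncSqrt
  split_ifs with h
  · rw [sub_zero, sqrt_sq hr]
  · nlinarith

lemma truncSqrt_sq_le (a : ℝ) {r : ℝ} (hr : 0 ≤ r) : truncSqrt a (r ^ 2) ≤ r + √|a| := by
  unfold truncSqrt
  split_ifs
  · rw [sqrt_le_iff]
    refine ⟨by positivity, ?_⟩
    nlinarith [neg_le_abs a, sq_sqrt (abs_nonneg a), sqrt_nonneg |a|]
  · positivity

section Weighted

variable {E : Type*} [SeminormedAddCommGroup E] [MeasurableSpace E] {μ : Measure E} {w : E → ℝ}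

lemma integrable_mul_const_add_norm (hw : Integrable w μ)
    (hwn : Integrable (fun x ↦ w x * ‖x‖) μ) (C : ℝ) :
    Integrable (fun x ↦ w x * (C + ‖x‖)) μ := by
  simp only [mul_add]
  exact (hw.mul_const C).add hwn

lemma integral_mul_const_add_norm (hw : Integrable w μ)
    (hwn : Integrable (fun x ↦ w x * ‖x‖) μ) (C : ℝ) :
    ∫ x, w x * (C + ‖x‖) ∂μ = (∫ x, w x ∂μ) * C + ∫ x, w x * ‖x‖ ∂μ := by
  simp only [mul_add]
  rw [integral_add (hw.mul_const C) hwn, integral_mul_const]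

lemma integrable_mul_norm_sub [OpensMeasurableSpace E] (hw0 : 0 ≤ w) (hw : Integrable w μ)
    (hwn : Integrable (fun x ↦ w x * ‖x‖) μ) (ξ : E) :
    Integrable (fun x ↦ w x * ‖ξ - x‖) μ := by
  refine (integrable_mul_const_add_norm hw hwn ‖ξ‖).mono'
    (hw.aestronglyMeasurable.mul (continuous_const.sub continuous_id).norm.aestronglyMeasurable)
    (.of_forall fun x ↦ ?_)
  rw [norm_mul, norm_norm, Real.norm_of_nonneg (hw0 x)]
  exact mul_le_mul_of_nonneg_left (norm_sub_le ξ x) (hw0 x)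

theorem exists_integral_mul_truncSqrt_le (hw0 : 0 ≤ w) (hw : Integrable w μ)
    (hwn : Integrable (fun x ↦ w x * ‖x‖) μ) (a : ℝ) :
    ∃ K, ∀ ξ, ∫ x, w x * truncSqrt a (‖ξ - x‖ ^ 2) ∂μ ≤ K * (1 + ‖ξ‖) := by
  have hA : 0 ≤ ∫ x, w x ∂μ := integral_nonneg hw0
  have hB : 0 ≤ ∫ x, w x * ‖x‖ ∂μ := integral_nonneg fun x ↦ mul_nonneg (hw0 x) (norm_nonneg x)
  refine ⟨(∫ x, w x ∂μ) * (1 + √|a|) + ∫ x, w x * ‖x‖ ∂μ, fun ξ ↦ ?_⟩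
  have hpt : ∀ x, w x * truncSqrt a (‖ξ - x‖ ^ 2) ≤ w x * ((‖ξ‖ + √|a|) + ‖x‖) := fun x ↦ by
    refine mul_le_mul_of_nonneg_left ?_ (hw0 x)
    linarith [truncSqrt_sq_le a (norm_nonneg (ξ - x)), norm_sub_le ξ x]
  calc ∫ x, w x * truncSqrt a (‖ξ - x‖ ^ 2) ∂μ
      ≤ ∫ x, w x * ((‖ξ‖ + √|a|) + ‖x‖) ∂μ :=
        integral_mono_of_nonneg (.of_forall fun x ↦ mul_nonneg (hw0 x) (truncSqrt_nonneg _ _))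
          (integrable_mul_const_add_norm hw hwn _) (.of_forall hpt)
    _ = (∫ x, w x ∂μ) * (‖ξ‖ + √|a|) + ∫ x, w x * ‖x‖ ∂μ := integral_mul_const_add_norm hw hwn _
    _ ≤ _ := by nlinarith [norm_nonneg ξ, sqrt_nonneg |a|, mul_nonneg hA (sqrt_nonneg |a|)]

end Weighted

lemma norm_add_norm_le_norm_sub_add_norm_add {E : Type*} [SeminormedAddCommGroup E]
    [NormedSpace ℝ E] (ξ x : E) : ‖ξ‖ + ‖x‖ ≤ ‖ξ - x‖ + ‖ξ + x‖ := by
  have hξ : 2 * ‖ξ‖ ≤ ‖ξ - x‖ + ‖ξ + x‖ := by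
    simpa [← two_smul ℝ ξ, norm_smul, sub_add_add_cancel] using norm_add_le (ξ - x) (ξ + x)
  have hx : 2 * ‖x‖ ≤ ‖ξ - x‖ + ‖ξ + x‖ := by
    simpa [← two_smul ℝ x, norm_smul, add_comm] using norm_sub_le (ξ + x) (ξ - x)
  linarith

section Symmetric

variable {E : Type*} [SeminormedAddCommGroup E] [NormedSpace ℝ E] [MeasurableSpace E]
  [OpensMeasurableSpace E] [MeasurableNeg E] {μ : Measure E} [μ.IsNegInvariant] {w : E → ℝ}

theorem integral_mul_add_integral_mul_norm_le (hw0 : 0 ≤ w) (hw_even : ∀ x, w (-x) = w x)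
    (hw : Integrable w μ) (hwn : Integrable (fun x ↦ w x * ‖x‖) μ) (ξ : E) :
    (∫ x, w x ∂μ) * ‖ξ‖ + ∫ x, w x * ‖x‖ ∂μ ≤ 2 * ∫ x, w x * ‖ξ - x‖ ∂μ := by
  have hsub := integrable_mul_norm_sub hw0 hw hwn ξ
  have hreflect : ∫ x, w x * ‖ξ + x‖ ∂μ = ∫ x, w x * ‖ξ - x‖ ∂μ := by
    rw [← integral_neg_eq_self]
    simp only [hw_even, ← sub_eq_add_neg]
  have hadd : Integrable (fun x ↦ w x * ‖ξ + x‖) μ := by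
    simpa [hw_even] using hsub.comp_neg
  calc (∫ x, w x ∂μ) * ‖ξ‖ + ∫ x, w x * ‖x‖ ∂μ = ∫ x, w x * (‖ξ‖ + ‖x‖) ∂μ :=
        (integral_mul_const_add_norm hw hwn _).symm
    _ ≤ ∫ x, w x * ‖ξ - x‖ + w x * ‖ξ + x‖ ∂μ :=
        integral_mono (integrable_mul_const_add_norm hw hwn _) (hsub.add hadd) fun x ↦ by
          rw [← mul_add]
          exact mul_le_mul_of_nonneg_left (norm_add_norm_le_norm_sub_add_norm_add ξ x) (hw0 x)
    _ = 2 * ∫ x, w x * ‖ξ - x‖ ∂μ := by rw [integral_add hsub hadd, hreflect, two_mul]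

theorem exists_pos_mul_le_integral_mul_norm_sub (hw0 : 0 ≤ w) (hw_even : ∀ x, w (-x) = w x)
    (hw : Integrable w μ) (hwn : Integrable (fun x ↦ w x * ‖x‖) μ)
    (hA : 0 < ∫ x, w x ∂μ) (hB : 0 < ∫ x, w x * ‖x‖ ∂μ) :
    ∃ k > 0, ∀ ξ, k * (1 + ‖ξ‖) ≤ ∫ x, w x * ‖ξ - x‖ ∂μ := by
  refine ⟨min (∫ x, w x ∂μ) (∫ x, w x * ‖x‖ ∂μ) / 2, by positivity, fun ξ ↦ ?_⟩
  have := integral_mul_add_integral_mul_norm_le hw0 hw_even hw hwn ξ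
  nlinarith [min_le_left (∫ x, w x ∂μ) (∫ x, w x * ‖x‖ ∂μ),
    min_le_right (∫ x, w x ∂μ) (∫ x, w x * ‖x‖ ∂μ), norm_nonneg ξ]

end Symmetric

section Gaussian

variable {E : Type*} [NormedAddCommGroup E] [NormedSpace ℝ E] [Nontrivial E]
  [FiniteDimensional ℝ E] [MeasurableSpace E] [BorelSpace E] (μ : Measure E) [μ.IsAddHaarMeasure]
  {b : ℝ}

lemma integrable_exp_neg_mul_sq_norm_mul_norm_pow (hb : 0 < b) (k : ℕ) :
    Integrable (fun x : E ↦ exp (-b * ‖x‖ ^ 2) * ‖x‖ ^ k) μ := by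
  rw [integrable_fun_norm_addHaar μ (f := fun r ↦ exp (-b * r ^ 2) * r ^ k)]
  have h := integrableOn_rpow_mul_exp_neg_mul_sq hb
    (s := (Module.finrank ℝ E - 1 + k : ℕ)) (by linarith [(Module.finrank ℝ E - 1 + k).cast_nonneg (α := ℝ)])
  refine h.congr_fun (fun r _ ↦ ?_) measurableSet_Ioi
  simp only [rpow_natCast, pow_add, smul_eq_mul]
  ring

lemma integrable_exp_neg_mul_sq_norm (hb : 0 < b) :
    Integrable (fun x : E ↦ exp (-b * ‖x‖ ^ 2)) μ := by
  simpa using integrable_exp_neg_mul_sq_norm_mul_norm_pow μ hb 0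

lemma integrable_exp_neg_mul_sq_norm_mul_norm (hb : 0 < b) :
    Integrable (fun x : E ↦ exp (-b * ‖x‖ ^ 2) * ‖x‖) μ := by
  simpa using integrable_exp_neg_mul_sq_norm_mul_norm_pow μ hb 1

lemma integral_exp_neg_mul_sq_norm_pos (hb : 0 < b) :
    0 < ∫ x : E, exp (-b * ‖x‖ ^ 2) ∂μ :=
  integral_pos_of_integrable_nonneg_nonzero (x := 0) (by fun_prop)
    (integrable_exp_neg_mul_sq_norm μ hb) (fun _ ↦ (exp_pos _).le) (exp_pos _).ne'

lemma integral_exp_neg_mul_sq_norm_mul_norm_pos (hb : 0 < b) :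
    0 < ∫ x : E, exp (-b * ‖x‖ ^ 2) * ‖x‖ ∂μ := by
  obtain ⟨x, hx⟩ := exists_ne (0 : E)
  exact integral_pos_of_integrable_nonneg_nonzero (x := x) (by fun_prop)
    (integrable_exp_neg_mul_sq_norm_mul_norm μ hb) (fun _ ↦ by positivity)
    (mul_ne_zero (exp_pos _).ne' (norm_ne_zero_iff.mpr hx))

theorem exists_integral_exp_neg_mul_sq_norm_mul_truncSqrt_le (hb : 0 < b) (a : ℝ) :
    ∃ K, ∀ ξ : E, ∫ x, exp (-b * ‖x‖ ^ 2) * truncSqrt a (‖ξ - x‖ ^ 2) ∂μ ≤ K * (1 + ‖ξ‖) :=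
  exists_integral_mul_truncSqrt_le (fun _ ↦ (exp_pos _).le)
    (integrable_exp_neg_mul_sq_norm μ hb) (integrable_exp_neg_mul_sq_norm_mul_norm μ hb) a

theorem exists_pos_mul_le_integral_exp_neg_mul_sq_norm_mul_norm_sub (hb : 0 < b) :
    ∃ k > 0, ∀ ξ : E, k * (1 + ‖ξ‖) ≤ ∫ x, exp (-b * ‖x‖ ^ 2) * ‖ξ - x‖ ∂μ :=
  exists_pos_mul_le_integral_mul_norm_sub (fun _ ↦ (exp_pos _).le) (fun x ↦ by rw [norm_neg])
    (integrable_exp_neg_mul_sq_norm μ hb) (integrable_exp_neg_mul_sq_norm_mul_norm μ hb)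
    (integral_exp_neg_mul_sq_norm_pos μ hb) (integral_exp_neg_mul_sq_norm_mul_norm_pos μ hb)

end Gaussian

theorem exists_two_sided_bound_sum_mul {X J : Type*} [Fintype J] {φ : X → ℝ} {c : J → ℝ}
    {T : J → X → ℝ} (hφ : 0 ≤ φ) (hc : ∀ j, 0 < c j) (hT : ∀ j ξ, 0 ≤ T j ξ)
    (hupper : ∀ j, ∃ K, ∀ ξ, T j ξ ≤ K * φ ξ) (j₀ : J) (hlower : ∃ k > 0, ∀ ξ, k * φ ξ ≤ T j₀ ξ) :
    ∃ νm νp : ℝ, 0 < νm ∧ νm < νp ∧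
      ∀ ξ, νm * φ ξ ≤ ∑ j, c j * T j ξ ∧ ∑ j, c j * T j ξ ≤ νp * φ ξ := by
  choose K hK using hupper
  obtain ⟨k, hk, hk_le⟩ := hlower
  set P := ∑ j, c j * K j
  have hck : 0 < c j₀ * k := mul_pos (hc j₀) hk
  refine ⟨c j₀ * k, max P (c j₀ * k) + c j₀ * k, hck, by linarith [le_max_right P (c j₀ * k)],
    fun ξ ↦ ⟨?_, ?_⟩⟩
  · calc c j₀ * k * φ ξ ≤ c j₀ * T j₀ ξ := by
          rw [mul_assoc]; exact mul_le_mul_of_nonneg_left (hk_le ξ) (hc j₀).le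
      _ ≤ ∑ j, c j * T j ξ := Finset.single_le_sum (f := fun j ↦ c j * T j ξ)
          (fun j _ ↦ mul_nonneg (hc j).le (hT j ξ)) (Finset.mem_univ j₀)
  · calc ∑ j, c j * T j ξ ≤ P * φ ξ := by
          rw [Finset.sum_mul]
          exact Finset.sum_le_sum fun j _ ↦ by
            rw [mul_assoc]; exact mul_le_mul_of_nonneg_left (hK j ξ) (hc j).le
      _ ≤ (max P (c j₀ * k) + c j₀ * k) * φ ξ := by
          gcongr
          · exact hφ ξ
          · linarith [le_max_left P (c j₀ * k)]

theorem collision_frequency_two_sided_bounds_general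
    {J : Type*} [Fintype J]
    (c m Δ : J → ℝ) (hc : ∀ j, 0 < c j) (hm : ∀ j, 0 < m j)
    (hΔ0 : ∃ j₀, Δ j₀ = 0)
    (ν : EuclideanSpace ℝ (Fin 3) → ℝ)
    (hν : ∀ ξ, ν ξ = ∑ j, c j *
      ∫ ξs : EuclideanSpace ℝ (Fin 3),
        Real.exp (-m j * ‖ξs‖ ^ 2 / 2) *
          (if 2 * Δ j < ‖ξ - ξs‖ ^ 2 then Real.sqrt (‖ξ - ξs‖ ^ 2 - 2 * Δ j) else 0)) :
    ∃ νm νp : ℝ, 0 < νm ∧ νm < νp ∧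
      ∀ ξ : EuclideanSpace ℝ (Fin 3),
        νm * (1 + ‖ξ‖) ≤ ν ξ ∧ ν ξ ≤ νp * (1 + ‖ξ‖) := by
  obtain ⟨j₀, hj₀⟩ := hΔ0
  have hb : ∀ j, 0 < m j / 2 := fun j ↦ half_pos (hm j)
  obtain rfl : ν = fun ξ ↦ ∑ j, c j *
      ∫ x, exp (-(m j / 2) * ‖x‖ ^ 2) * truncSqrt (2 * Δ j) (‖ξ - x‖ ^ 2) := by
    ext ξ
    simp only [hν, truncSqrt, neg_mul, neg_div, mul_div_right_comm]
  refine exists_two_sided_bound_sum_mul (fun ξ ↦ by positivity) hc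
    (fun j ξ ↦ integral_nonneg fun x ↦ mul_nonneg (exp_pos _).le (truncSqrt_nonneg _ _))
    (fun j ↦ exists_integral_exp_neg_mul_sq_norm_mul_truncSqrt_le volume (hb j) _) j₀ ?_
  obtain ⟨k, hk, hk_le⟩ := exists_pos_mul_le_integral_exp_neg_mul_sq_norm_mul_norm_sub
    (E := EuclideanSpace ℝ (Fin 3)) volume (hb j₀)
  refine ⟨k, hk, fun ξ ↦ ?_⟩
  simpa only [hj₀, mul_zero, truncSqrt_zero_sq (norm_nonneg _)] using hk_le ξ

/-- Two-sided bounds on the collision frequency (Theorem 2 of the paper). -/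
theorem collision_frequency_two_sided_bounds
    {J : Type*} [Fintype J] [Nonempty J]
    (c m Δ : J → ℝ) (hc : ∀ j, 0 < c j) (hm : ∀ j, 0 < m j)
    (hΔ0 : ∃ j₀, Δ j₀ = 0)
    (ν : EuclideanSpace ℝ (Fin 3) → ℝ)
    (hν : ∀ ξ, ν ξ = ∑ j, c j *
      ∫ ξs : EuclideanSpace ℝ (Fin 3),
        Real.exp (-m j * ‖ξs‖ ^ 2 / 2) *
          (if 2 * Δ j < ‖ξ - ξs‖ ^ 2 then Real.sqrt (‖ξ - ξs‖ ^ 2 - 2 * Δ j) else 0)) :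
    ∃ νm νp : ℝ, 0 < νm ∧ νm < νp ∧
      ∀ ξ : EuclideanSpace ℝ (Fin 3),
        νm * (1 + ‖ξ‖) ≤ ν ξ ∧ ν ξ ≤ νp * (1 + ‖ξ‖) :=
  collision_frequency_two_sided_bounds_general c m Δ hc hm hΔ0 ν hν
end
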